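/- arXiv:1408.4471 — 3 statements merged into one kernel-verified Lean document; each statement's English description precedes it below -/
import Mathlib

section
/- Let B = [B_T B_C] be an oriented incidence matrix of a connected graph (the null space of Bᵀ equals the span of the all-ones vector) with spanning-tree decomposition, cut-set matrix R, and diagonal real weight matrix W, and assume R·W·Rᵀ is invertible. Define X = (B_Tᴸ)ᵀ·(R·W·Rᵀ)⁻¹·B_Tᴸ, where B_Tᴸ = L_e(T)⁻¹·B_Tᵀ. Then (i) X = (B_Tᴸ)ᵀ·L_ess⁻¹·B_Tᵀ, where L_ess = L_e(T)·R·W·Rᵀ, and (ii) X is the Moore–Penrose pseudoinverse of the weighted Laplacian L = B·W·Bᵀ, i.e. L·X·L = L, X·L·X = X, (L·X)ᵀ = L·X, and (X·L)ᵀ = X·L. -/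
open Matrix

/-- `B` is an oriented incidence matrix: every column has exactly one `1`,
exactly one `-1`, and zeros elsewhere. -/
def IsIncidenceMatrix {V E : Type*} (B : Matrix V E ℝ) : Prop :=
  ∀ e : E, ∃ i j : V, i ≠ j ∧ B i e = 1 ∧ B j e = -1 ∧
    ∀ k : V, k ≠ i → k ≠ j → B k e = 0

/-!
Writing `B_C = B_T·T` (the columns of `B_C` lie in the column span of `B_T`, and `B_Tᴸ` is a left
inverse of `B_T`), the incidence matrix factors as `B = B_T·R`, hence `L = B_T·M·B_Tᵀ` with
`M = R·W·Rᵀ`. For any left inverse `G` of `A` for which `A·G` is symmetric, `Gᵀ·M⁻¹·G` is the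
Moore–Penrose inverse of `A·M·Aᵀ`: both `L·X` and `X·L` collapse to the orthogonal projection
`A·G` onto the column span of `A`. Part (i) is `(L_e(T)·M)⁻¹ = M⁻¹·L_e(T)⁻¹`.
-/

namespace Matrix

variable {m n p R : Type*}

def IsMoorePenroseInverse [Fintype m] [CommRing R] (L : Matrix m m R) (X : Matrix m m R) : Prop :=
  L * X * L = L ∧ X * L * X = X ∧ (L * X)ᵀ = L * X ∧ (X * L)ᵀ = X * L

/-- The left inverse `B_Tᴸ = (B_Tᵀ·B_T)⁻¹·B_Tᵀ` of a matrix with independent columns. -/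
noncomputable def gramLeftInv [Fintype m] [Fintype n] [DecidableEq n] [CommRing R]
    (A : Matrix m n R) : Matrix n m R :=
  (Aᵀ * A)⁻¹ * Aᵀ

theorem exists_mul_eq_of_col_mem_span [CommRing R] [Fintype n] {A : Matrix m n R}
    {B : Matrix m p R} (hB : ∀ c, B.col c ∈ Submodule.span R (Set.range A.col)) :
    ∃ X : Matrix n p R, A * X = B := by
  rw [← range_mulVecLin] at hB
  choose x hx using hB
  exact ⟨(of x)ᵀ, ext fun i c => congrFun (hx c) i⟩

section CommRing

variable [Fintype m] [Fintype n] [DecidableEq n] [CommRing R]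

theorem gramLeftInv_mul_self {A : Matrix m n R} (hA : IsUnit (Aᵀ * A).det) :
    gramLeftInv A * A = 1 := by
  rw [gramLeftInv, Matrix.mul_assoc, nonsing_inv_mul _ hA]

theorem transpose_mul_gramLeftInv (A : Matrix m n R) :
    (A * gramLeftInv A)ᵀ = A * gramLeftInv A := by
  rw [gramLeftInv, transpose_mul, transpose_mul, transpose_transpose, transpose_nonsing_inv,
    transpose_mul, transpose_transpose, Matrix.mul_assoc]

theorem mul_gramLeftInv_mul_of_mul_eq [Fintype p] {A : Matrix m n R} {X : Matrix n p R}
    {B : Matrix m p R} (hX : A * X = B) (hA : IsUnit (Aᵀ * A).det) :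
    A * (gramLeftInv A * B) = B := by
  rw [← hX, ← Matrix.mul_assoc (gramLeftInv A), gramLeftInv_mul_self hA, Matrix.one_mul]

theorem isMoorePenroseInverse_mul_mul_transpose {A : Matrix m n R} {G : Matrix n m R}
    {M : Matrix n n R} (hGA : G * A = 1) (hAG : (A * G)ᵀ = A * G) (hM : IsUnit M.det) :
    IsMoorePenroseInverse (A * M * Aᵀ) (Gᵀ * M⁻¹ * G) := by
  have hLX : A * M * Aᵀ * (Gᵀ * M⁻¹ * G) = A * G := by
    calc A * M * Aᵀ * (Gᵀ * M⁻¹ * G) = A * M * (G * A)ᵀ * M⁻¹ * G := by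
          simp only [transpose_mul, Matrix.mul_assoc]
      _ = A * G := by
          rw [hGA, transpose_one, Matrix.mul_one, Matrix.mul_assoc A, mul_nonsing_inv _ hM,
            Matrix.mul_one]
  have hXL : Gᵀ * M⁻¹ * G * (A * M * Aᵀ) = A * G := by
    calc Gᵀ * M⁻¹ * G * (A * M * Aᵀ) = Gᵀ * (M⁻¹ * (G * A) * M) * Aᵀ := by
          simp only [Matrix.mul_assoc]
      _ = A * G := by
          rw [hGA, Matrix.mul_one, nonsing_inv_mul _ hM, Matrix.mul_one, ← transpose_mul, hAG]
  refine ⟨?_, ?_, by rw [hLX, hAG], by rw [hXL, hAG]⟩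
  · rw [hLX, ← Matrix.mul_assoc, ← Matrix.mul_assoc, Matrix.mul_assoc A, hGA, Matrix.mul_one]
  · rw [Matrix.mul_assoc, hLX, ← Matrix.mul_assoc, Matrix.mul_assoc _ G A, hGA, Matrix.mul_one]

end CommRing

theorem isUnit_det_transpose_mul_self [Fintype m] [Fintype n] [DecidableEq n] [Field R]
    [LinearOrder R] [IsStrictOrderedRing R] {A : Matrix m n R} (hA : LinearIndependent R A.col) :
    IsUnit (Aᵀ * A).det := by
  rwa [← isUnit_iff_isUnit_det, ← mulVec_injective_iff_isUnit, ← coe_mulVecLin,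
    ← LinearMap.ker_eq_bot, ker_mulVecLin_transpose_mul_self, LinearMap.ker_eq_bot, coe_mulVecLin,
    mulVec_injective_iff]

end Matrix

theorem laplacian_pseudoinverse_via_essential_edge_laplacian_general
    {V T C : Type*} [Fintype V] [Fintype T] [Fintype C]
    [DecidableEq T] [DecidableEq C]
    (BT : Matrix V T ℝ) (BC : Matrix V C ℝ)
    (hInd : LinearIndependent ℝ (fun f : T => (fun v : V => BT v f)))
    (hSpan : ∀ c : C, (fun v : V => BC v c) ∈
      Submodule.span ℝ (Set.range (fun f : T => (fun v : V => BT v f))))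
    (w : T ⊕ C → ℝ)
    -- `R·W·Rᵀ` is invertible
    (hRWR : IsUnit ((Matrix.fromCols (1 : Matrix T T ℝ) ((BTᵀ * BT)⁻¹ * BTᵀ * BC)) * Matrix.diagonal w *
      (Matrix.fromCols (1 : Matrix T T ℝ) ((BTᵀ * BT)⁻¹ * BTᵀ * BC))ᵀ).det) :
    -- abbreviations via `let`
    (((BTᵀ * BT)⁻¹ * BTᵀ)ᵀ *
        ((Matrix.fromCols (1 : Matrix T T ℝ) ((BTᵀ * BT)⁻¹ * BTᵀ * BC)) * Matrix.diagonal w *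
          (Matrix.fromCols (1 : Matrix T T ℝ) ((BTᵀ * BT)⁻¹ * BTᵀ * BC))ᵀ)⁻¹ *
        ((BTᵀ * BT)⁻¹ * BTᵀ) =
      ((BTᵀ * BT)⁻¹ * BTᵀ)ᵀ *
        ((BTᵀ * BT) *
          ((Matrix.fromCols (1 : Matrix T T ℝ) ((BTᵀ * BT)⁻¹ * BTᵀ * BC)) * Matrix.diagonal w *
            (Matrix.fromCols (1 : Matrix T T ℝ) ((BTᵀ * BT)⁻¹ * BTᵀ * BC))ᵀ))⁻¹ * BTᵀ) ∧
    (let L := Matrix.fromCols BT BC * Matrix.diagonal w * (Matrix.fromCols BT BC)ᵀ;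
     let X := ((BTᵀ * BT)⁻¹ * BTᵀ)ᵀ *
        ((Matrix.fromCols (1 : Matrix T T ℝ) ((BTᵀ * BT)⁻¹ * BTᵀ * BC)) * Matrix.diagonal w *
          (Matrix.fromCols (1 : Matrix T T ℝ) ((BTᵀ * BT)⁻¹ * BTᵀ * BC))ᵀ)⁻¹ *
        ((BTᵀ * BT)⁻¹ * BTᵀ);
     L * X * L = L ∧ X * L * X = X ∧ (L * X)ᵀ = L * X ∧ (X * L)ᵀ = X * L) := by
  have hGram : IsUnit (BTᵀ * BT).det := isUnit_det_transpose_mul_self hInd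
  obtain ⟨Tc, hTc⟩ := exists_mul_eq_of_col_mem_span hSpan
  set R := Matrix.fromCols (1 : Matrix T T ℝ) (gramLeftInv BT * BC)
  have hB : Matrix.fromCols BT BC = BT * R := by
    rw [mul_fromCols, Matrix.mul_one, mul_gramLeftInv_mul_of_mul_eq hTc hGram]
  have hL : Matrix.fromCols BT BC * diagonal w * (Matrix.fromCols BT BC)ᵀ =
      BT * (R * diagonal w * Rᵀ) * BTᵀ := by
    rw [hB, transpose_mul]
    simp only [Matrix.mul_assoc]
  refine ⟨by rw [Matrix.mul_inv_rev]; simp only [Matrix.mul_assoc], ?_⟩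
  dsimp only
  rw [hL]
  exact isMoorePenroseInverse_mul_mul_transpose (gramLeftInv_mul_self hGram)
    (transpose_mul_gramLeftInv BT) hRWR

/-- for a connected graph with spanning-tree decomposition `B = [B_T  B_C]`,
cut-set matrix `R = [I  T]` and invertible `R·W·Rᵀ`, the matrix
`X = (B_Tᴸ)ᵀ·(R·W·Rᵀ)⁻¹·B_Tᴸ` equals `(B_Tᴸ)ᵀ·L_ess⁻¹·B_Tᵀ` and is the Moore–Penrose
pseudoinverse of `L = B·W·Bᵀ`. -/
theorem laplacian_pseudoinverse_via_essential_edge_laplacian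
    {V T C : Type*} [Fintype V] [Fintype T] [Fintype C]
    [DecidableEq V] [DecidableEq T] [DecidableEq C] [Nonempty V]
    (BT : Matrix V T ℝ) (BC : Matrix V C ℝ)
    (hInc : IsIncidenceMatrix (Matrix.fromCols BT BC))
    (hInd : LinearIndependent ℝ (fun f : T => (fun v : V => BT v f)))
    (hSpan : ∀ c : C, (fun v : V => BC v c) ∈
      Submodule.span ℝ (Set.range (fun f : T => (fun v : V => BT v f))))
    -- the graph is connected
    (hConn : LinearMap.ker (Matrix.fromCols BT BC)ᵀ.mulVecLin =
      Submodule.span ℝ {(fun _ : V => (1 : ℝ))})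
    (w : T ⊕ C → ℝ)
    -- `R·W·Rᵀ` is invertible
    (hRWR : IsUnit ((Matrix.fromCols (1 : Matrix T T ℝ) ((BTᵀ * BT)⁻¹ * BTᵀ * BC)) * Matrix.diagonal w *
      (Matrix.fromCols (1 : Matrix T T ℝ) ((BTᵀ * BT)⁻¹ * BTᵀ * BC))ᵀ).det) :
    -- abbreviations via `let`
    (((BTᵀ * BT)⁻¹ * BTᵀ)ᵀ *
        ((Matrix.fromCols (1 : Matrix T T ℝ) ((BTᵀ * BT)⁻¹ * BTᵀ * BC)) * Matrix.diagonal w *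
          (Matrix.fromCols (1 : Matrix T T ℝ) ((BTᵀ * BT)⁻¹ * BTᵀ * BC))ᵀ)⁻¹ *
        ((BTᵀ * BT)⁻¹ * BTᵀ) =
      ((BTᵀ * BT)⁻¹ * BTᵀ)ᵀ *
        ((BTᵀ * BT) *
          ((Matrix.fromCols (1 : Matrix T T ℝ) ((BTᵀ * BT)⁻¹ * BTᵀ * BC)) * Matrix.diagonal w *
            (Matrix.fromCols (1 : Matrix T T ℝ) ((BTᵀ * BT)⁻¹ * BTᵀ * BC))ᵀ))⁻¹ * BTᵀ) ∧
    (let L := Matrix.fromCols BT BC * Matrix.diagonal w * (Matrix.fromCols BT BC)ᵀ;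
     let X := ((BTᵀ * BT)⁻¹ * BTᵀ)ᵀ *
        ((Matrix.fromCols (1 : Matrix T T ℝ) ((BTᵀ * BT)⁻¹ * BTᵀ * BC)) * Matrix.diagonal w *
          (Matrix.fromCols (1 : Matrix T T ℝ) ((BTᵀ * BT)⁻¹ * BTᵀ * BC))ᵀ)⁻¹ *
        ((BTᵀ * BT)⁻¹ * BTᵀ);
     L * X * L = L ∧ X * L * X = X ∧ (L * X)ᵀ = L * X ∧ (X * L)ᵀ = X * L) :=
  laplacian_pseudoinverse_via_essential_edge_laplacian_general BT BC hInd hSpan w hRWR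
end

section
/- Let B₊ be an oriented incidence matrix of a connected graph with diagonal weight matrix W₊ having strictly positive entries, set L₊ = B₊·W₊·B₊ᵀ with Moore–Penrose pseudoinverse L₊†, let B₋ be an oriented incidence matrix of the negative edges with D diagonal having strictly positive entries d_1, …, d_m, and set L = L₊ − B₋·D·B₋ᵀ. If L is positive semidefinite, then Σ_{k=1}^{m} 1/d_k ≥ trace(B₋ᵀ·L₊†·B₋) (the total effective resistance over the node pairs incident to the negative edges). -/
/-!
Let `b` be the column of `B₋` of a negative edge `k`, `x = L₊† b` and `r = bᵀ L₊† b`, the `k`-th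
diagonal entry of `B₋ᵀ L₊† B₋`. The pseudoinverse of the symmetric `L₊` is symmetric (by uniqueness
of the Moore–Penrose inverse), so `L₊† L₊ L₊† = L₊†` gives `xᵀ L₊ x = r`, while
`xᵀ B₋ D B₋ᵀ x ≥ d_k (bᵀ x)² = d_k r²`. Positive semidefiniteness of `L` then says `d_k r² ≤ r`,
i.e. `r ≤ 1 / d_k`, and summing over `k` bounds the trace.
-/

open Matrix

namespace Matrix

section

variable {m n R : Type*} [Fintype m] [Fintype n] [CommRing R]

structure IsMoorePenroseInverse_s11 (A : Matrix m n R) (X : Matrix n m R) : Prop where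
  mul_mul_left : A * X * A = A
  mul_mul_right : X * A * X = X
  isSymm_mul_left : (A * X).IsSymm
  isSymm_mul_right : (X * A).IsSymm

namespace IsMoorePenroseInverse_s11

variable {A : Matrix m n R} {X Y : Matrix n m R}

theorem transpose (h : IsMoorePenroseInverse_s11 A X) : IsMoorePenroseInverse_s11 Aᵀ Xᵀ where
  mul_mul_left := by rw [← transpose_mul, ← transpose_mul, ← Matrix.mul_assoc, h.mul_mul_left]
  mul_mul_right := by rw [← transpose_mul, ← transpose_mul, ← Matrix.mul_assoc, h.mul_mul_right]
  isSymm_mul_left := by rw [← transpose_mul]; exact h.isSymm_mul_right.transpose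
  isSymm_mul_right := by rw [← transpose_mul]; exact h.isSymm_mul_left.transpose

theorem unique (hX : IsMoorePenroseInverse_s11 A X) (hY : IsMoorePenroseInverse_s11 A Y) : X = Y := by
  have hAX : A * X = A * Y :=
    calc A * X = A * Y * (A * X) := by rw [← Matrix.mul_assoc, hY.mul_mul_left]
    _ = (A * Y)ᵀ * (A * X)ᵀ := by rw [hY.isSymm_mul_left.eq, hX.isSymm_mul_left.eq]
    _ = (A * X * A * Y)ᵀ := by rw [← transpose_mul, Matrix.mul_assoc (A * X)]
    _ = A * Y := by rw [hX.mul_mul_left, hY.isSymm_mul_left.eq]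
  have hXA : X * A = Y * A :=
    calc X * A = X * A * (Y * A) := by rw [Matrix.mul_assoc, ← Matrix.mul_assoc A, hY.mul_mul_left]
    _ = (X * A)ᵀ * (Y * A)ᵀ := by rw [hX.isSymm_mul_right.eq, hY.isSymm_mul_right.eq]
    _ = (Y * (A * X * A))ᵀ := by rw [← transpose_mul]; simp only [Matrix.mul_assoc]
    _ = Y * A := by rw [hX.mul_mul_left, hY.isSymm_mul_right.eq]
  calc X = X * A * X := hX.mul_mul_right.symm
  _ = Y * A * Y := by rw [hXA, Matrix.mul_assoc, hAX, ← Matrix.mul_assoc]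
  _ = Y := hY.mul_mul_right

end IsMoorePenroseInverse_s11

theorem IsSymm.isSymm_of_isMoorePenroseInverse {A X : Matrix n n R} (hA : A.IsSymm)
    (hX : IsMoorePenroseInverse_s11 A X) : X.IsSymm :=
  (hX.unique (hA.eq ▸ hX.transpose)).symm

end

section

variable {m n R : Type*} [Fintype n] [DecidableEq n] [CommRing R]

theorem isSymm_mul_diagonal_mul_transpose (B : Matrix m n R) (w : n → R) :
    (B * diagonal w * Bᵀ).IsSymm := by
  rw [IsSymm, transpose_mul, transpose_mul, transpose_transpose, (isSymm_diagonal w).eq,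
    Matrix.mul_assoc]

theorem dotProduct_mul_diagonal_mul_transpose_mulVec [Fintype m] (B : Matrix m n R)
    (w : n → R) (y : m → R) :
    y ⬝ᵥ ((B * diagonal w * Bᵀ) *ᵥ y) = ∑ e, w e * (Bᵀ *ᵥ y) e ^ 2 := by
  rw [← mulVec_mulVec, ← mulVec_mulVec, dotProduct_mulVec, ← mulVec_transpose]
  simp only [dotProduct, mulVec_diagonal]
  exact Finset.sum_congr rfl fun e _ => by ring

end

end Matrix

theorem le_inv_of_mul_sq_le {𝕜 : Type*} [Field 𝕜] [LinearOrder 𝕜] [IsStrictOrderedRing 𝕜]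
    {d r : 𝕜} (hd : 0 < d) (h : d * r ^ 2 ≤ r) : r ≤ d⁻¹ := by
  rcases le_or_gt r 0 with hr | hr
  · exact hr.trans (inv_pos.2 hd).le
  · rw [le_inv_comm₀ hr hd, inv_eq_one_div, le_div_iff₀ hr]
    nlinarith

theorem Matrix.transpose_mul_mul_apply_self_le_inv {V E : Type*} [Fintype V] [Fintype E]
    [DecidableEq E] {A X : Matrix V V ℝ} (B : Matrix V E ℝ) {d : E → ℝ} (hd : ∀ e, 0 < d e)
    (hX : X.IsSymm) (hXAX : X * A * X = X) (hPSD : (A - B * diagonal d * Bᵀ).PosSemidef)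
    (k : E) : (Bᵀ * X * B) k k ≤ (d k)⁻¹ := by
  set b : V → ℝ := fun i => B i k
  set x := X *ᵥ b
  have hentry : (Bᵀ * X * B) k k = b ⬝ᵥ x := by
    simp only [x, b, mul_apply, mulVec, dotProduct, transpose_apply, Finset.sum_mul, Finset.mul_sum]
    rw [Finset.sum_comm]
    exact Finset.sum_congr rfl fun _ _ => Finset.sum_congr rfl fun _ _ => by ring
  have hA : x ⬝ᵥ (A *ᵥ x) = b ⬝ᵥ x :=
    calc x ⬝ᵥ (A *ᵥ x) = (b ᵥ* Xᵀ) ⬝ᵥ (A *ᵥ X *ᵥ b) := by rw [vecMul_transpose]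
    _ = b ⬝ᵥ ((X * A * X) *ᵥ b) := by
        rw [← dotProduct_mulVec, hX.eq, mulVec_mulVec, mulVec_mulVec, Matrix.mul_assoc]
    _ = b ⬝ᵥ x := by rw [hXAX]
  have hB : d k * (b ⬝ᵥ x) ^ 2 ≤ x ⬝ᵥ ((B * diagonal d * Bᵀ) *ᵥ x) := by
    rw [dotProduct_mul_diagonal_mul_transpose_mulVec]
    exact Finset.single_le_sum (f := fun e => d e * (Bᵀ *ᵥ x) e ^ 2)
      (fun e _ => mul_nonneg (hd e).le (sq_nonneg _)) (Finset.mem_univ k)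
  have hpos := hPSD.dotProduct_mulVec_nonneg x
  rw [star_trivial, sub_mulVec, dotProduct_sub, hA] at hpos
  rw [hentry]
  exact le_inv_of_mul_sq_le (hd k) (by linarith)

theorem psd_implies_total_resistance_bound_general
    {V Ep Em : Type*} [Fintype V] [Fintype Ep] [Fintype Em]
    [DecidableEq Ep] [DecidableEq Em]
    (Bp : Matrix V Ep ℝ) (Bm : Matrix V Em ℝ)
    (wp : Ep → ℝ)
    (d : Em → ℝ) (hd : ∀ e, 0 < d e)
    -- `Ld` is the Moore–Penrose pseudoinverse of `L₊ = B₊·W₊·B₊ᵀ`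
    (Ld : Matrix V V ℝ)
    (hp1 : (Bp * Matrix.diagonal wp * Bpᵀ) * Ld * (Bp * Matrix.diagonal wp * Bpᵀ) =
      Bp * Matrix.diagonal wp * Bpᵀ)
    (hp2 : Ld * (Bp * Matrix.diagonal wp * Bpᵀ) * Ld = Ld)
    (hp3 : ((Bp * Matrix.diagonal wp * Bpᵀ) * Ld)ᵀ = (Bp * Matrix.diagonal wp * Bpᵀ) * Ld)
    (hp4 : (Ld * (Bp * Matrix.diagonal wp * Bpᵀ))ᵀ = Ld * (Bp * Matrix.diagonal wp * Bpᵀ))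
    (hPSD : (Bp * Matrix.diagonal wp * Bpᵀ - Bm * Matrix.diagonal d * Bmᵀ).PosSemidef) :
    (Bmᵀ * Ld * Bm).trace ≤ ∑ k : Em, (d k)⁻¹ := by
  have hLd : Ld.IsSymm :=
    (isSymm_mul_diagonal_mul_transpose Bp wp).isSymm_of_isMoorePenroseInverse ⟨hp1, hp2, hp3, hp4⟩
  exact Finset.sum_le_sum fun k _ => transpose_mul_mul_apply_self_le_inv Bm hd hLd hp2 hPSD k

/-- if `L = L₊ − B₋·D·B₋ᵀ` is positive semidefinite then
`Σ_k 1/d_k ≥ trace(B₋ᵀ·L₊†·B₋)` (total effective resistance). -/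
theorem psd_implies_total_resistance_bound
    {V Ep Em : Type*} [Fintype V] [Fintype Ep] [Fintype Em]
    [DecidableEq V] [DecidableEq Ep] [DecidableEq Em] [Nonempty V]
    (Bp : Matrix V Ep ℝ) (Bm : Matrix V Em ℝ)
    (hBp : IsIncidenceMatrix Bp) (hBm : IsIncidenceMatrix Bm)
    (wp : Ep → ℝ) (hwp : ∀ e, 0 < wp e)
    (d : Em → ℝ) (hd : ∀ e, 0 < d e)
    -- the positive graph is connected
    (hConn : LinearMap.ker Bpᵀ.mulVecLin = Submodule.span ℝ {(fun _ : V => (1 : ℝ))})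
    -- `Ld` is the Moore–Penrose pseudoinverse of `L₊ = B₊·W₊·B₊ᵀ`
    (Ld : Matrix V V ℝ)
    (hp1 : (Bp * Matrix.diagonal wp * Bpᵀ) * Ld * (Bp * Matrix.diagonal wp * Bpᵀ) =
      Bp * Matrix.diagonal wp * Bpᵀ)
    (hp2 : Ld * (Bp * Matrix.diagonal wp * Bpᵀ) * Ld = Ld)
    (hp3 : ((Bp * Matrix.diagonal wp * Bpᵀ) * Ld)ᵀ = (Bp * Matrix.diagonal wp * Bpᵀ) * Ld)
    (hp4 : (Ld * (Bp * Matrix.diagonal wp * Bpᵀ))ᵀ = Ld * (Bp * Matrix.diagonal wp * Bpᵀ))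
    (hPSD : (Bp * Matrix.diagonal wp * Bpᵀ - Bm * Matrix.diagonal d * Bmᵀ).PosSemidef) :
    (Bmᵀ * Ld * Bm).trace ≤ ∑ k : Em, (d k)⁻¹ :=
  psd_implies_total_resistance_bound_general Bp Bm wp d hd Ld hp1 hp2 hp3 hp4 hPSD
end

section
/- Let B₊ be an oriented incidence matrix of a connected graph with diagonal weight matrix W₊ having strictly positive entries, set L₊ = B₊·W₊·B₊ᵀ, let u ≠ v be two vertices with effective resistance R_uv = (e_u − e_v)ᵀ·L₊†·(e_u − e_v) (L₊† the Moore–Penrose pseudoinverse of L₊), and let d > 1/R_uv. Then the consensus dynamics with the additional negative edge of weight −d between u and v is unstable: with L = L₊ − d·(e_u − e_v)·(e_u − e_v)ᵀ, there exists x₀ ∈ ℝ^V such that ‖exp(−t·L)·x₀‖ → ∞ as t → ∞, where exp is the matrix exponential. -/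
open Matrix

/-!
With `y = e_u − e_v`, connectivity makes the kernel of `L₊` the constants, to which `y` is
orthogonal; so `y` lies in the range of `L₊` and `z = L₊† y` solves `L₊ z = y`. Then
`zᵀ L₊ z = yᵀ z = R_uv > 0`, and `zᵀ L z = R_uv (1 − d R_uv) < 0`. The symmetric matrix `L`
therefore has a negative eigenvalue `λ`, and on an eigenvector for it `exp(−tL)` acts as
multiplication by `e^{−tλ} → ∞`.
-/

open Filter

namespace Matrix

section PseudoInverse

variable {n : Type*} [Fintype n] {L M : Matrix n n ℝ}

theorem mul_mul_pinv_eq_self (hL : Lᵀ = L) (h1 : L * M * L = L) (h3 : (L * M)ᵀ = L * M) :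
    L * (L * M) = L :=
  calc L * (L * M) = Lᵀ * (L * M)ᵀ := by rw [hL, h3]
    _ = L := by rw [← transpose_mul, h1, hL]

theorem mulVec_pinv_mulVec_eq_self (hL : Lᵀ = L) (h1 : L * M * L = L) (h3 : (L * M)ᵀ = L * M)
    {y : n → ℝ} (hy : ∀ x, L *ᵥ x = 0 → x ⬝ᵥ y = 0) : L *ᵥ (M *ᵥ y) = y := by
  set q := y - (L * M) *ᵥ y
  have hLq : L *ᵥ q = 0 := by
    rw [mulVec_sub, mulVec_mulVec, mul_mul_pinv_eq_self hL h1 h3, sub_self]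
  have hPq : (L * M) *ᵥ q = 0 := by
    rw [mulVec_sub, mulVec_mulVec, ← Matrix.mul_assoc, h1, sub_self]
  have hqP : q ⬝ᵥ (L * M) *ᵥ y = 0 := by
    rw [dotProduct_mulVec, ← mulVec_transpose, h3, hPq, zero_dotProduct]
  have hqq : q ⬝ᵥ q = 0 := by
    rw [dotProduct_sub, hy q hLq, hqP, sub_zero]
  rw [mulVec_mulVec]
  exact (sub_eq_zero.mp (dotProduct_self_eq_zero.mp hqq)).symm

end PseudoInverse

section WeightedLaplacian

variable {V E : Type*} [Fintype V] [Fintype E] [DecidableEq E] (B : Matrix V E ℝ) {w : E → ℝ}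

theorem posSemidef_mul_diagonal_mul_transpose (hw : ∀ e, 0 ≤ w e) :
    (B * diagonal w * Bᵀ).PosSemidef := by
  simpa only [conjTranspose_eq_transpose_of_trivial] using
    (PosSemidef.diagonal hw).mul_mul_conjTranspose_same B

theorem mul_diagonal_mul_transpose_mulVec_eq_zero_iff (hw : ∀ e, 0 < w e) {x : V → ℝ} :
    (B * diagonal w * Bᵀ) *ᵥ x = 0 ↔ Bᵀ *ᵥ x = 0 := by
  refine ⟨fun hx => ?_, fun hx => by rw [← mulVec_mulVec, hx, mulVec_zero]⟩
  by_contra hBx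
  have hquad : Bᵀ *ᵥ x ⬝ᵥ diagonal w *ᵥ (Bᵀ *ᵥ x) = x ⬝ᵥ (B * diagonal w * Bᵀ) *ᵥ x := by
    rw [← mulVec_mulVec, ← mulVec_mulVec, dotProduct_mulVec x B, ← mulVec_transpose]
  exact ((posDef_diagonal_iff.mpr hw).dotProduct_mulVec_pos hBx).ne' (by
    simpa only [star_trivial, hquad, hx] using dotProduct_zero x)

end WeightedLaplacian

section QuadraticForm

variable {n : Type*} [Fintype n] {L : Matrix n n ℝ}

theorem PosSemidef.dotProduct_mulVec_pos_of_mulVec_ne_zero (hL : L.PosSemidef) {z : n → ℝ}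
    (hz : L *ᵥ z ≠ 0) : 0 < z ⬝ᵥ L *ᵥ z :=
  (hL.dotProduct_mulVec_nonneg z).lt_of_ne' fun h => hz ((hL.dotProduct_mulVec_zero_iff z).mp h)

theorem PosSemidef.dotProduct_sub_smul_vecMulVec_mulVec_neg (hL : L.PosSemidef) {y z : n → ℝ}
    (hz : L *ᵥ z = y) {d : ℝ} (hd : 1 < d * (y ⬝ᵥ z)) :
    z ⬝ᵥ (L - d • vecMulVec y y) *ᵥ z < 0 := by
  have hR : 0 < y ⬝ᵥ z := by
    have hnn : 0 ≤ y ⬝ᵥ z := by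
      simpa only [star_trivial, hz, dotProduct_comm] using hL.dotProduct_mulVec_nonneg z
    refine hnn.lt_of_ne fun h => ?_
    rw [← h, mul_zero] at hd
    exact zero_le_one.not_gt hd
  have : z ⬝ᵥ (L - d • vecMulVec y y) *ᵥ z = (y ⬝ᵥ z) * (1 - d * (y ⬝ᵥ z)) := by
    rw [sub_mulVec, smul_mulVec, vecMulVec_mulVec, hz, op_smul_eq_smul, dotProduct_sub,
      dotProduct_smul, dotProduct_smul, dotProduct_comm z y, smul_eq_mul, smul_eq_mul]
    ring
  rw [this]
  exact mul_neg_of_pos_of_neg hR (by linarith)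

end QuadraticForm

section Exponential

-- Any normed-algebra structure gives access to the exponential series; `exp` does not depend on it.
attribute [local instance] Matrix.linftyOpNormedRing Matrix.linftyOpNormedAlgebra

variable {n : Type*} [Fintype n] [DecidableEq n]

theorem exp_mulVec_of_mulVec_eq_smul {A : Matrix n n ℝ} {w : n → ℝ} {μ : ℝ}
    (h : A *ᵥ w = μ • w) : NormedSpace.exp A *ᵥ w = Real.exp μ • w := by
  have hpow : ∀ k : ℕ, A ^ k *ᵥ w = μ ^ k • w := by
    intro k
    induction k with
    | zero => simp
    | succ k ih => rw [pow_succ, ← mulVec_mulVec, h, mulVec_smul, ih, smul_smul, pow_succ']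
  have hA := (NormedSpace.exp_series_hasSum_exp' (𝕂 := ℝ) A).map (mulVec.addMonoidHomLeft w)
    (continuous_id.matrix_mulVec continuous_const)
  have hμ := (NormedSpace.exp_series_hasSum_exp' (𝕂 := ℝ) μ).smul_const w
  rw [← Real.exp_eq_exp_ℝ] at hμ
  refine hA.unique ?_
  convert hμ using 2 with k
  simp [mulVec.addMonoidHomLeft, smul_mulVec, hpow, smul_smul]

theorem tendsto_norm_exp_neg_smul_mulVec_atTop {L : Matrix n n ℝ} {w : n → ℝ} {μ : ℝ}
    (h : L *ᵥ w = μ • w) (hμ : μ < 0) (hw : w ≠ 0) :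
    Tendsto (fun t : ℝ => ‖NormedSpace.exp (-(t • L)) *ᵥ w‖) atTop atTop := by
  have hexp (t : ℝ) : NormedSpace.exp (-(t • L)) *ᵥ w = Real.exp (t * -μ) • w :=
    exp_mulVec_of_mulVec_eq_smul <| by
      rw [neg_mulVec, smul_mulVec, h, smul_smul, ← neg_smul, mul_neg]
  simp only [hexp, norm_smul, Real.norm_eq_abs, Real.abs_exp]
  exact (Real.tendsto_exp_atTop.comp (tendsto_id.atTop_mul_const (neg_pos.mpr hμ))).atTop_mul_const
    (norm_pos_iff.mpr hw)

theorem IsHermitian.exists_eigenvalues_neg {L : Matrix n n ℝ} (hL : L.IsHermitian) {z : n → ℝ}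
    (hz : z ⬝ᵥ L *ᵥ z < 0) : ∃ i, hL.eigenvalues i < 0 := by
  by_contra! h
  exact hz.not_ge ((hL.posSemidef_iff_eigenvalues_nonneg.mpr h).dotProduct_mulVec_nonneg z)

theorem IsHermitian.exists_tendsto_norm_exp_neg_smul_mulVec_atTop {L : Matrix n n ℝ}
    (hL : L.IsHermitian) {z : n → ℝ} (hz : z ⬝ᵥ L *ᵥ z < 0) :
    ∃ x₀ : n → ℝ, Tendsto (fun t : ℝ => ‖NormedSpace.exp (-(t • L)) *ᵥ x₀‖) atTop atTop := by
  obtain ⟨i, hi⟩ := hL.exists_eigenvalues_neg hz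
  refine ⟨hL.eigenvectorBasis i, tendsto_norm_exp_neg_smul_mulVec_atTop
    (hL.mulVec_eigenvectorBasis i) hi fun h0 => hL.eigenvectorBasis.orthonormal.ne_zero i ?_⟩
  simpa using congrArg (WithLp.toLp 2) h0

end Exponential

end Matrix

theorem single_negative_edge_consensus_unstable_general
    {V Ep : Type*} [Fintype V] [Fintype Ep]
    [DecidableEq V] [DecidableEq Ep]
    (Bp : Matrix V Ep ℝ)
    (wp : Ep → ℝ) (hwp : ∀ e, 0 < wp e)
    -- the positive graph is connected
    (hConn : LinearMap.ker Bpᵀ.mulVecLin = Submodule.span ℝ {(fun _ : V => (1 : ℝ))})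
    -- `Ld` is the Moore–Penrose pseudoinverse of `L₊ = B₊·W₊·B₊ᵀ`
    (Ld : Matrix V V ℝ)
    (hp1 : (Bp * Matrix.diagonal wp * Bpᵀ) * Ld * (Bp * Matrix.diagonal wp * Bpᵀ) =
      Bp * Matrix.diagonal wp * Bpᵀ)
    (hp3 : ((Bp * Matrix.diagonal wp * Bpᵀ) * Ld)ᵀ = (Bp * Matrix.diagonal wp * Bpᵀ) * Ld)
    (u v : V) (huv : u ≠ v) (d : ℝ)
    -- `d` exceeds the inverse effective resistance between `u` and `v`
    (hd : 1 / ((Pi.single u 1 - Pi.single v 1) ⬝ᵥ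
      Ld.mulVec (Pi.single u 1 - Pi.single v 1)) < d) :
    ∃ x₀ : V → ℝ,
      Filter.Tendsto
        (fun t : ℝ =>
          ‖(NormedSpace.exp
              (-(t • (Bp * Matrix.diagonal wp * Bpᵀ -
                d • Matrix.vecMulVec (Pi.single u 1 - Pi.single v 1)
                  (Pi.single u 1 - Pi.single v 1))))).mulVec x₀‖)
        Filter.atTop Filter.atTop := by
  set Lp := Bp * diagonal wp * Bpᵀ
  set y : V → ℝ := Pi.single u 1 - Pi.single v 1
  have hLp : Lp.PosSemidef := posSemidef_mul_diagonal_mul_transpose Bp fun e => (hwp e).le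
  have hy : y ≠ 0 := fun h => by simpa [y, huv] using congrFun h u
  have hy_ker (x : V → ℝ) (hx : Lp *ᵥ x = 0) : x ⬝ᵥ y = 0 := by
    have hx' : x ∈ LinearMap.ker Bpᵀ.mulVecLin :=
      (mul_diagonal_mul_transpose_mulVec_eq_zero_iff Bp hwp).mp hx
    obtain ⟨c, rfl⟩ := Submodule.mem_span_singleton.mp (hConn ▸ hx')
    simp [y, dotProduct, ← Finset.mul_sum, Finset.sum_sub_distrib]
  have hLz : Lp *ᵥ (Ld *ᵥ y) = y :=
    mulVec_pinv_mulVec_eq_self hLp.isHermitian.eq hp1 hp3 hy_ker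
  have hR : 0 < y ⬝ᵥ Ld *ᵥ y := by
    have h := hLp.dotProduct_mulVec_pos_of_mulVec_ne_zero (z := Ld *ᵥ y) (by rwa [hLz])
    rwa [hLz, dotProduct_comm] at h
  have hyy : (vecMulVec y y).IsHermitian := by
    simpa only [star_trivial] using (posSemidef_vecMulVec_self_star y).isHermitian
  have hL : (Lp - d • vecMulVec y y).IsHermitian :=
    hLp.isHermitian.sub (hyy.smul (IsSelfAdjoint.all d))
  exact hL.exists_tendsto_norm_exp_neg_smul_mulVec_atTop
    (hLp.dotProduct_sub_smul_vecMulVec_mulVec_neg hLz ((div_lt_iff₀ hR).mp hd))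

/-- if a single negative edge of weight `−d` with `d > 1/R_uv` is added
between `u` and `v`, the consensus dynamics `ẋ = −L·x` is unstable: some solution
`t ↦ exp(−t·L)·x₀` blows up. -/
theorem single_negative_edge_consensus_unstable
    {V Ep : Type*} [Fintype V] [Fintype Ep]
    [DecidableEq V] [DecidableEq Ep] [Nonempty V]
    (Bp : Matrix V Ep ℝ) (hBp : IsIncidenceMatrix Bp)
    (wp : Ep → ℝ) (hwp : ∀ e, 0 < wp e)
    -- the positive graph is connected
    (hConn : LinearMap.ker Bpᵀ.mulVecLin = Submodule.span ℝ {(fun _ : V => (1 : ℝ))})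
    -- `Ld` is the Moore–Penrose pseudoinverse of `L₊ = B₊·W₊·B₊ᵀ`
    (Ld : Matrix V V ℝ)
    (hp1 : (Bp * Matrix.diagonal wp * Bpᵀ) * Ld * (Bp * Matrix.diagonal wp * Bpᵀ) =
      Bp * Matrix.diagonal wp * Bpᵀ)
    (hp2 : Ld * (Bp * Matrix.diagonal wp * Bpᵀ) * Ld = Ld)
    (hp3 : ((Bp * Matrix.diagonal wp * Bpᵀ) * Ld)ᵀ = (Bp * Matrix.diagonal wp * Bpᵀ) * Ld)
    (hp4 : (Ld * (Bp * Matrix.diagonal wp * Bpᵀ))ᵀ = Ld * (Bp * Matrix.diagonal wp * Bpᵀ))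
    (u v : V) (huv : u ≠ v) (d : ℝ)
    -- `d` exceeds the inverse effective resistance between `u` and `v`
    (hd : 1 / ((Pi.single u 1 - Pi.single v 1) ⬝ᵥ
      Ld.mulVec (Pi.single u 1 - Pi.single v 1)) < d) :
    ∃ x₀ : V → ℝ,
      Filter.Tendsto
        (fun t : ℝ =>
          ‖(NormedSpace.exp
              (-(t • (Bp * Matrix.diagonal wp * Bpᵀ -
                d • Matrix.vecMulVec (Pi.single u 1 - Pi.single v 1)
                  (Pi.single u 1 - Pi.single v 1))))).mulVec x₀‖)
        Filter.atTop Filter.atTop :=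
  single_negative_edge_consensus_unstable_general Bp wp hwp hConn Ld hp1 hp3 u v huv d hd
end
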